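/- Fix integers A, a and a positive integer C with a ∈ {0,1,2,3}, gcd(A,C) = 1, and 0 < A/C < 1, and let r = C if C is even and r = 2C if C is odd. Then for all τ ∈ ℍ, V_α(τ + r) = ζ₈^{−r} (−1)^{Ar/C + r/2} e(−(r/2)(A/C − 1/2)²) V_α(τ), where Ar/C and r/2 are integers. -/

import Mathlib

open Complex Real

noncomputable section

/-- `e(z) = e^{2πiz}`. -/
def ee (z : ℂ) : ℂ := Complex.exp (2 * Real.pi * Complex.I * z)

/-- Jacobi theta: `ϑ(z;τ) = ∑_{v∈ℤ+1/2} e^{πiv²τ + 2πiv(z+1/2)}`. -/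
def jTheta (z τ : ℂ) : ℂ :=
  ∑' n : ℤ, Complex.exp (Real.pi * Complex.I * ((n : ℂ) + 1/2)^2 * τ
      + 2 * Real.pi * Complex.I * ((n : ℂ) + 1/2) * (z + 1/2))

/-- Zwegers' μ-function. -/
def zMu (u v τ : ℂ) : ℂ :=
  Complex.exp (Real.pi * Complex.I * u) / jTheta v τ *
    ∑' n : ℤ, (-1 : ℂ)^n * Complex.exp (2 * Real.pi * Complex.I * (n : ℂ) * v)
      * Complex.exp (Real.pi * Complex.I * (n : ℂ) * ((n : ℂ) + 1) * τ)
      / (1 - Complex.exp (2 * Real.pi * Complex.I * u)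
            * Complex.exp (2 * Real.pi * Complex.I * (n : ℂ) * τ))

/-- Zwegers' nonholomorphic `R` function. -/
def zR (u τ : ℂ) : ℂ :=
  ∑' n : ℤ,
    (((Real.sign ((n : ℝ) + 1/2)
        - 2 * ∫ t in (0:ℝ)..((((n : ℝ) + 1/2) + u.im / τ.im) * Real.sqrt (2 * τ.im)),
            Real.exp (-Real.pi * t^2)) : ℝ) : ℂ)
      * (-1 : ℂ)^n
      * Complex.exp (Real.pi * Complex.I * ((n : ℂ) + 1/2)^2 * τ
          - 2 * Real.pi * Complex.I * ((n : ℂ) + 1/2) * u)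

/-- Completed `μ̂`. -/
def zMuHat (u v τ : ℂ) : ℂ := zMu u v τ + zR (u - v) τ / 2

/-- `V_α(τ) = i^{a+1} q^{-(2A-C)²/(8C²)} μ(2α, τ/2; τ)` with `2α = (A/C)τ + a/2`. -/
def Valpha (A : ℤ) (C : ℕ) (a : ℤ) (τ : ℂ) : ℂ :=
  Complex.I^(a+1) * ee (-(((2*A - (C:ℤ) : ℤ) : ℂ)^2 / (8 * (C:ℂ)^2)) * τ)
    * zMu ((A : ℂ)/(C : ℂ) * τ + (a : ℂ)/2) (τ/2) τ

/-- Completed `V̂_α`. -/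
def ValphaHat (A : ℤ) (C : ℕ) (a : ℤ) (τ : ℂ) : ℂ :=
  Complex.I^(a+1) * ee (-(((2*A - (C:ℤ) : ℤ) : ℂ)^2 / (8 * (C:ℂ)^2)) * τ)
    * zMuHat ((A : ℂ)/(C : ℂ) * τ + (a : ℂ)/2) (τ/2) τ

/-- Mordell integral. -/
def mordellH (u τ : ℂ) : ℂ :=
  ∫ x : ℝ, Complex.exp (Real.pi * Complex.I * τ * (x:ℂ)^2 - 2 * Real.pi * u * (x:ℂ))
    / Complex.cosh (Real.pi * (x:ℂ))

/-- Zwegers' weight 3/2 theta functions `g_{a,b}`. -/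
def gab (a b : ℝ) (τ : ℂ) : ℂ :=
  ∑' n : ℤ, ((a : ℂ) + (n : ℂ))
    * Complex.exp (Real.pi * Complex.I * ((a:ℂ) + (n:ℂ))^2 * τ
        + 2 * Real.pi * Complex.I * ((a:ℂ) + (n:ℂ)) * (b:ℂ))

/-- Integral along the vertical ray from `c` to `i∞`. -/
def rayIntegral (c : ℂ) (f : ℂ → ℂ) : ℂ :=
  ∫ t in Set.Ioi (0:ℝ), Complex.I * f (c + (t : ℂ) * Complex.I)

/-- The function `δ_{x,y}(τ)`. -/
def deltaXY (x y : ℝ) (τ : ℂ) : ℂ :=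
  rayIntegral 0 (fun z => gab (x + 1/2) (y + 1/2) z / (-Complex.I * (z + τ)) ^ (1/2 : ℂ))
    + ee ((x:ℂ) * ((y:ℂ) + 1/2)) * ee (-((x:ℂ)^2/2) * τ) * mordellH ((x:ℂ)*τ - (y:ℂ)) τ

/-- The eta multiplier `ψ(γ)` for `γ = (a b; c d)`. -/
def etaPsi (a b c d : ℤ) : ℂ :=
  if Odd c then
    ((jacobiSym d c.natAbs : ℤ) : ℂ)
      * Complex.exp (Real.pi * Complex.I / 12 * (((a+d)*c - b*d*(c^2-1) - 3*c : ℤ) : ℂ))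
  else
    (((if d < 0 ∧ c < 0 then -1 else 1) * jacobiSym c d.natAbs : ℤ) : ℂ)
      * Complex.exp (Real.pi * Complex.I / 12
          * (((a+d)*c - b*d*(c^2-1) + 3*d - 3 - 3*c*d : ℤ) : ℂ))

end



/-! The translation `τ ↦ τ + r` moves the arguments of `μ(2α, τ/2; τ)` by the integers `Ar/C`,
`r/2` and `r`. Zwegers' μ is periodic up to a sign in its two elliptic variables and up to an
eighth root of unity in `τ`, so `V_α(τ + r)/V_α(τ)` is a product of these constants and of the
factor coming from `q^{-(2A-C)²/(8C²)}`. -/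

lemma exp_pi_mul_I_mul_int (k : ℤ) : Complex.exp (π * I * k) = (-1) ^ k := by
  rw [mul_comm, Complex.exp_int_mul, Complex.exp_pi_mul_I]

lemma ee_add (x y : ℂ) : ee (x + y) = ee x * ee y := by
  rw [ee, ee, ee, ← Complex.exp_add, mul_add]

section ThetaMu

variable (u v z τ : ℂ)

lemma jTheta_add_int (m : ℤ) : jTheta (z + m) τ = (-1) ^ m * jTheta z τ := by
  rw [jTheta, jTheta, ← tsum_mul_left]
  refine tsum_congr fun n => ?_
  rw [← exp_pi_mul_I_mul_int, ← Complex.exp_add]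
  exact Complex.exp_eq_exp_iff_exists_int.2 ⟨n * m, by push_cast; ring⟩

lemma jTheta_tau_add_int (l : ℤ) :
    jTheta z (τ + l) = Complex.exp (π * I * l / 4) * jTheta z τ := by
  rw [jTheta, jTheta, ← tsum_mul_left]
  refine tsum_congr fun n => ?_
  obtain ⟨j, hj⟩ := Int.even_mul_succ_self n
  rw [← Complex.exp_add]
  refine Complex.exp_eq_exp_iff_exists_int.2 ⟨l * j, ?_⟩
  have hj' : (n : ℂ) * (n + 1) = j + j := by exact_mod_cast hj
  push_cast
  linear_combination π * I * l * hj'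

lemma zMu_add_int_left (k : ℤ) : zMu (u + k) v τ = (-1) ^ k * zMu u v τ := by
  have hper : Complex.exp (2 * π * I * (u + k)) = Complex.exp (2 * π * I * u) :=
    Complex.exp_eq_exp_iff_exists_int.2 ⟨k, by ring⟩
  have hhalf : Complex.exp (π * I * (u + k)) = (-1) ^ k * Complex.exp (π * I * u) := by
    rw [← exp_pi_mul_I_mul_int, ← Complex.exp_add]; ring_nf
  rw [zMu, zMu, hper, hhalf, mul_div_assoc, mul_assoc]

lemma zMu_add_int_mid (m : ℤ) : zMu u (v + m) τ = (-1) ^ m * zMu u v τ := by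
  have hsum : ∀ n : ℤ, Complex.exp (2 * π * I * n * (v + m)) = Complex.exp (2 * π * I * n * v) :=
    fun n => Complex.exp_eq_exp_iff_exists_int.2 ⟨n * m, by push_cast; ring⟩
  have hinv : ((-1 : ℂ) ^ m)⁻¹ = (-1) ^ m := by rw [← inv_zpow, inv_neg_one]
  simp only [zMu, hsum, jTheta_add_int, div_mul_eq_div_div, div_eq_mul_inv _ ((-1 : ℂ) ^ m), hinv]
  ring

lemma zMu_tau_add_int (l : ℤ) :
    zMu u v (τ + l) = Complex.exp (-(π * I * l / 4)) * zMu u v τ := by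
  have hquad : ∀ n : ℤ, Complex.exp (π * I * n * (n + 1) * (τ + l))
      = Complex.exp (π * I * n * (n + 1) * τ) := fun n => by
    obtain ⟨j, hj⟩ := Int.even_mul_succ_self n
    refine Complex.exp_eq_exp_iff_exists_int.2 ⟨l * j, ?_⟩
    have hj' : (n : ℂ) * (n + 1) = j + j := by exact_mod_cast hj
    push_cast
    linear_combination π * I * l * hj'
  have hlin : ∀ n : ℤ, Complex.exp (2 * π * I * n * (τ + l)) = Complex.exp (2 * π * I * n * τ) :=
    fun n => Complex.exp_eq_exp_iff_exists_int.2 ⟨n * l, by push_cast; ring⟩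
  rw [zMu, zMu, jTheta_tau_add_int, Complex.exp_neg]
  simp only [hquad, hlin]
  ring

end ThetaMu

lemma Valpha_add_int (A a : ℤ) {C : ℕ} (hC : C ≠ 0) {r : ℤ} (hAr : (C : ℤ) ∣ A * r)
    (hr : (2 : ℤ) ∣ r) (τ : ℂ) :
    Valpha A C a (τ + r)
      = Complex.exp (-(2 * π * I * r) / 8) * (-1) ^ (A * r / C + r / 2)
        * ee (-((r : ℂ) / 2) * ((A : ℂ) / C - 1 / 2) ^ 2) * Valpha A C a τ := by
  have hCne : (C : ℂ) ≠ 0 := Nat.cast_ne_zero.2 hC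
  have hk : ((A * r / C : ℤ) : ℂ) = A / C * r := by
    rw [Int.cast_div_charZero hAr]; push_cast; ring
  have hm : ((r / 2 : ℤ) : ℂ) = r / 2 := by
    rw [Int.cast_div_charZero hr]; push_cast; ring
  have hu : (A : ℂ) / C * (τ + r) + a / 2 = ((A : ℂ) / C * τ + a / 2) + (A * r / C : ℤ) := by
    rw [hk]; ring
  have hv : (τ + r) / 2 = τ / 2 + (r / 2 : ℤ) := by rw [hm]; ring
  -- `(A/C - 1/2)² = (2A - C)²/(4C²)` is twice the exponent of `q` in `V_α`
  have hq : ee (-(((2 * A - C : ℤ) : ℂ) ^ 2 / (8 * (C : ℂ) ^ 2)) * r)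
      = ee (-((r : ℂ) / 2) * ((A : ℂ) / C - 1 / 2) ^ 2) := by
    congr 1; field_simp; push_cast; ring
  rw [Valpha, Valpha, hu, hv, zMu_add_int_left, zMu_add_int_mid, zMu_tau_add_int, mul_add,
    ee_add, hq, zpow_add₀ (by norm_num : (-1 : ℂ) ≠ 0)]
  ring_nf

theorem stmt11 (A a : ℤ) (C : ℕ) (hC : 0 < C)
    (r : ℤ) (hr : r = if Even C then (C:ℤ) else 2*(C:ℤ)) :
    (C:ℤ) ∣ A * r ∧ (2:ℤ) ∣ r ∧
    ∀ τ : ℂ, 0 < τ.im →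
      Valpha A C a (τ + (r:ℂ))
        = Complex.exp (-(2 * Real.pi * Complex.I * (r:ℂ)) / 8)
          * (-1 : ℂ)^(A*r/C + r/2)
          * ee (-((r:ℂ)/2) * ((A:ℂ)/(C:ℂ) - 1/2)^2)
          * Valpha A C a τ := by
  have hCr : (C : ℤ) ∣ r := by
    rw [hr]; split_ifs
    exacts [dvd_rfl, dvd_mul_left _ _]
  have h2r : (2 : ℤ) ∣ r := by
    rw [hr]; split_ifs with hev
    exacts [even_iff_two_dvd.1 (Int.even_coe_nat C |>.2 hev), dvd_mul_right _ _]
  exact ⟨hCr.mul_left A, h2r,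
    fun τ _ => Valpha_add_int A a hC.ne' (hCr.mul_left A) h2r τ⟩
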